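/- arXiv:2312.10752 — 2 statements merged into one kernel-verified Lean document; each statement's English description precedes it below -/
import Mathlib

section
/- With A_i(s) the operators defined by A_i(0) = δ_{i,1}/(1+b) and A_i(s+1) = Σ_{n≥1} J_{i-n} A_n(s) + b(i-1) A_i(s), for all i, j ≥ 1 one has [A_i(1), A_j(2)] = (i-1)·A_{i+j-1}(1), and consequently the antisymmetrized relation [A_i(1), A_j(2)] − [A_j(1), A_i(2)] = (i-j)·A_{i+j-1}(1). -/
/-!
Up to the factor `(1 + b)⁻¹`, `A_i(1)` is the current `J_{i-1}` and `A_j(2)` is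
`Σ_{n ≥ 1} J_{j-n} J_{n-1} + b (j - 1) J_{j-1}`. The currents form a Heisenberg algebra,
`[J_m, J_k] = (1 + b) m δ_{m+k,0}`, so `J_{i-1}` commutes with every `J_k`, `k ≥ 0`, and in the
quadratic sum only the term `n = i + j - 1`, where `J_{j-n} = J_{1-i}`, contributes to the
commutator, giving `(1 + b)(i - 1) J_{i+j-2}`.
-/

open MvPolynomial

variable {K : Type*} [Field K]

/-- The `b`-deformed current `J_i` acting on `K[p_1, p_2, ...]` (with `X n = p_n` for `n ≥ 1`):
multiplication by `p_{-i}` for `i < 0`, `(1+b)·i·∂/∂p_i` for `i > 0`, and `0` for `i = 0`. -/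
noncomputable def Jc (b : K) (i : ℤ) : MvPolynomial ℕ K → MvPolynomial ℕ K :=
  if 0 < i then fun P => ((1 + b) * (i : K)) • pderiv i.toNat P
  else if i < 0 then fun P => X (-i).toNat * P
  else 0

/-- `p_i^* = i·∂/∂p_i`, with the convention `p_n^* = 0` for `n ≤ 0`. -/
noncomputable def pstar (i : ℤ) : MvPolynomial ℕ K → MvPolynomial ℕ K :=
  if 0 < i then fun P => (i : K) • pderiv i.toNat P else 0

/-- The operators `A_i(s)` : `A_i(0) = δ_{i,1}/(1+b)`,
`A_i(s+1) = Σ_{n ≥ 1} J_{i-n} A_n(s) + b(i-1) A_i(s)` (pointwise, locally finite sums). -/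
noncomputable def Aop (b : K) : ℕ → ℕ → MvPolynomial ℕ K → MvPolynomial ℕ K
  | 0, i => fun P => if i = 1 then (1 + b)⁻¹ • P else 0
  | s + 1, i => fun P =>
      (∑ᶠ n : ℕ, if 1 ≤ n then Jc b ((i : ℤ) - n) (Aop b s n P) else 0)
        + (b * ((i : K) - 1)) • Aop b s i P

/-- Commutator of operators (as functions). -/
noncomputable def commOp (f g : MvPolynomial ℕ K → MvPolynomial ℕ K) : MvPolynomial ℕ K → MvPolynomial ℕ K :=
  fun P => f (g P) - g (f P)

theorem pderiv_comm {σ R : Type*} [CommRing R] (a c : σ) (P : MvPolynomial σ R) :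
    pderiv a (pderiv c P) = pderiv c (pderiv a P) := by
  have h : ⁅pderiv a, pderiv c⁆ = (0 : Derivation R (MvPolynomial σ R) (MvPolynomial σ R)) :=
    derivation_ext fun k => by
      classical
      rw [Derivation.commutator_apply, pderiv_X, pderiv_X, Pi.single_apply, Pi.single_apply]
      split_ifs <;> simp
  have := congr($h P)
  rwa [Derivation.commutator_apply, Derivation.zero_apply, sub_eq_zero] at this

theorem pderiv_X_mul_of_ne {σ R : Type*} [CommSemiring R] {a c : σ} (h : c ≠ a)
    (P : MvPolynomial σ R) : pderiv a (X c * P) = X c * pderiv a P := by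
  simp [pderiv_X_of_ne h]

theorem pderiv_X_mul_self {σ R : Type*} [CommSemiring R] (a : σ) (P : MvPolynomial σ R) :
    pderiv a (X a * P) = X a * pderiv a P + P := by
  simp [add_comm]

section Currents

variable (b : K)

noncomputable def JcLinear (i : ℤ) : MvPolynomial ℕ K →ₗ[K] MvPolynomial ℕ K :=
  if 0 < i then ((1 + b) * (i : K)) • (pderiv i.toNat).toLinearMap
  else if i < 0 then LinearMap.mulLeft K (X (-i).toNat)
  else 0

@[simp]
theorem coe_JcLinear (i : ℤ) : ⇑(JcLinear b i) = Jc b i := by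
  unfold JcLinear Jc
  split_ifs <;> rfl

theorem Jc_of_pos {i : ℤ} (h : 0 < i) (P : MvPolynomial ℕ K) :
    Jc b i P = ((1 + b) * (i : K)) • pderiv i.toNat P := by
  simp [Jc, h]

theorem Jc_of_neg {i : ℤ} (h : i < 0) (P : MvPolynomial ℕ K) :
    Jc b i P = X (-i).toNat * P := by
  simp [Jc, h, h.not_gt]

@[simp]
theorem Jc_zero : Jc b 0 = (0 : MvPolynomial ℕ K → MvPolynomial ℕ K) := by
  simp [Jc]

@[simp]
theorem Jc_map_zero (i : ℤ) : Jc b i 0 = 0 := by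
  rw [← coe_JcLinear, map_zero]

theorem Jc_add (i : ℤ) (P Q : MvPolynomial ℕ K) : Jc b i (P + Q) = Jc b i P + Jc b i Q := by
  simp only [← coe_JcLinear, map_add]

theorem Jc_smul (i : ℤ) (c : K) (P : MvPolynomial ℕ K) : Jc b i (c • P) = c • Jc b i P := by
  simp only [← coe_JcLinear, map_smul]

theorem Jc_sum {ι : Type*} (i : ℤ) (s : Finset ι) (f : ι → MvPolynomial ℕ K) :
    Jc b i (∑ k ∈ s, f k) = ∑ k ∈ s, Jc b i (f k) := by
  simp only [← coe_JcLinear, map_sum]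

theorem Jc_natCast_eq_zero {k : ℕ} {P : MvPolynomial ℕ K} (h : k ∉ P.vars) :
    Jc b k P = 0 := by
  rcases Nat.eq_zero_or_pos k with rfl | hk
  · simp
  · rw [Jc_of_pos b (by omega), Int.toNat_natCast, pderiv_eq_zero_of_notMem_vars h, smul_zero]

theorem Jc_commute {m k : ℤ} (h : m + k ≠ 0) (P : MvPolynomial ℕ K) :
    Jc b m (Jc b k P) = Jc b k (Jc b m P) := by
  wlog hmk : m ≤ k generalizing m k
  · exact (this (by omega) (by omega)).symm
  rcases lt_trichotomy m 0 with hm | rfl | hm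
  · rcases lt_trichotomy k 0 with hk | rfl | hk
    · simp only [Jc_of_neg b hm, Jc_of_neg b hk, mul_left_comm]
    · simp
    · rw [Jc_of_neg b hm, Jc_of_pos b hk, Jc_of_pos b hk, Jc_of_neg b hm,
        pderiv_X_mul_of_ne (by omega), mul_smul_comm]
  · simp
  · rw [Jc_of_pos b hm, Jc_of_pos b (by omega), Jc_of_pos b hm, Jc_of_pos b (by omega),
      Derivation.map_smul, Derivation.map_smul, pderiv_comm, smul_comm]

theorem Jc_natCast_commute (m k : ℕ) (P : MvPolynomial ℕ K) :
    Jc b m (Jc b k P) = Jc b k (Jc b m P) := by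
  rcases Nat.eq_zero_or_pos (m + k) with h | h
  · obtain ⟨rfl, rfl⟩ : m = 0 ∧ k = 0 := by omega
    rfl
  · exact Jc_commute b (by omega) P

theorem Jc_sub_Jc_neg (m : ℤ) (P : MvPolynomial ℕ K) :
    Jc b m (Jc b (-m) P) - Jc b (-m) (Jc b m P) = ((1 + b) * (m : K)) • P := by
  rcases lt_trichotomy m 0 with hm | rfl | hm
  · rw [Jc_of_neg b hm, Jc_of_pos b (by omega), Jc_of_pos b (by omega), Jc_of_neg b hm,
      pderiv_X_mul_self]
    simp [smul_add]
  · simp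
  · rw [Jc_of_pos b hm, Jc_of_neg b (by omega), Jc_of_neg b (by omega), Jc_of_pos b hm, neg_neg,
      pderiv_X_mul_self]
    simp [smul_add]

end Currents

theorem finsum_ite_one_le {M : Type*} [AddCommMonoid M] (f : ℕ → M) :
    ∑ᶠ n : ℕ, (if 1 ≤ n then f n else 0) = ∑ᶠ k : ℕ, f (k + 1) := by
  rw [← finsum_mem_range (add_left_injective 1), finsum_mem_def]
  congr! 2 with n
  by_cases h : 1 ≤ n
  · have hn : n ∈ Set.range (· + 1) := ⟨n - 1, Nat.sub_add_cancel h⟩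
    rw [if_pos h, Set.indicator_of_mem hn]
  · have hn : n ∉ Set.range (· + 1) := by
      rintro ⟨k, rfl⟩
      exact h (Nat.le_add_left 1 k)
    rw [if_neg h, Set.indicator_of_notMem hn]

section Operators

variable (b : K)

/-- `Jquad b (j - 1) = Σ_{n ≥ 1} J_{j-n} J_{n-1}`, the quadratic part of `A_j(2)`. -/
noncomputable def Jquad (d : ℤ) (P : MvPolynomial ℕ K) : MvPolynomial ℕ K :=
  ∑ᶠ k : ℕ, Jc b (d - k) (Jc b k P)

theorem Jquad_eq_sum {d : ℤ} {P : MvPolynomial ℕ K} {T : Finset ℕ} (hT : P.vars ⊆ T) :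
    Jquad b d P = ∑ k ∈ T, Jc b (d - k) (Jc b k P) := by
  refine finsum_eq_sum_of_support_subset _ fun k hk => hT ?_
  by_contra h
  exact hk (by simp [Jc_natCast_eq_zero b h])

theorem Jquad_smul (d : ℤ) (c : K) (P : MvPolynomial ℕ K) :
    Jquad b d (c • P) = c • Jquad b d P := by
  simp only [Jquad, smul_finsum, Jc_smul]

theorem Aop_one (i : ℕ) (P : MvPolynomial ℕ K) :
    Aop b 1 i P = (1 + b)⁻¹ • Jc b (i - 1) P := by
  rw [Aop]
  dsimp only
  rw [finsum_ite_one_le]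
  simp only [Aop, Nat.add_eq_right, apply_ite (Jc b _), Jc_smul, Jc_map_zero]
  rw [finsum_eq_single _ 0 fun k hk => if_neg hk, if_pos rfl]
  split_ifs with hi
  · simp [hi]
  · simp

theorem Aop_two (j : ℕ) (P : MvPolynomial ℕ K) :
    Aop b 2 j P = (1 + b)⁻¹ • (Jquad b (j - 1) P + (b * (j - 1)) • Jc b (j - 1) P) := by
  rw [Aop]
  dsimp only
  rw [finsum_ite_one_le]
  have hterm : ∀ k : ℕ, Jc b (j - (k + 1 : ℕ)) (Aop b 1 (k + 1) P) =
      (1 + b)⁻¹ • Jc b (j - 1 - k) (Jc b k P) := by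
    intro k
    rw [Aop_one, Jc_smul]
    push_cast
    ring_nf
  rw [finsum_congr hterm, ← smul_finsum, Aop_one, smul_add, smul_comm]
  rfl

theorem Jc_Jquad_sub (m d : ℕ) (P : MvPolynomial ℕ K) :
    Jc b m (Jquad b d P) - Jquad b d (Jc b m P) =
      ((1 + b) * (m : K)) • Jc b (m + d : ℕ) P := by
  set T := P.vars ∪ (Jc b m P).vars ∪ {m + d}
  have hterm : ∀ k ∈ T, Jc b m (Jc b (d - k) (Jc b k P)) - Jc b (d - k) (Jc b k (Jc b m P)) =
      if k = m + d then ((1 + b) * (m : K)) • Jc b k P else 0 := by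
    intro k _
    rw [Jc_natCast_commute b k m P]
    split_ifs with hk
    · rw [hk, show (d : ℤ) - (m + d : ℕ) = -m by push_cast; ring, Jc_sub_Jc_neg,
        Int.cast_natCast]
    · rw [Jc_commute b (by omega), sub_self]
  rw [Jquad_eq_sum b (T := T) (by intro v; simp +contextual [T]),
    Jquad_eq_sum b (T := T) (by intro v; simp +contextual [T]), Jc_sum, ← Finset.sum_sub_distrib,
    Finset.sum_congr rfl hterm, Finset.sum_ite_eq']
  simp [T]

end Operators

theorem commOp_Aop_one_Aop_two (b : K) {i j : ℕ} (hi : 1 ≤ i) (hj : 1 ≤ j) :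
    commOp (Aop b 1 i) (Aop b 2 j) = ((i : K) - 1) • Aop b 1 (i + j - 1) := by
  obtain ⟨m, rfl⟩ := Nat.exists_eq_add_of_le' hi
  obtain ⟨d, rfl⟩ := Nat.exists_eq_add_of_le' hj
  funext P
  have hJ : ∀ n : ℕ, ((n + 1 : ℕ) : ℤ) - 1 = n := fun n => by push_cast; ring
  simp only [commOp, Pi.smul_apply, Aop_one, Aop_two, hJ,
    show m + 1 + (d + 1) - 1 = m + d + 1 by omega]
  -- valid also when `1 + b = 0`, where all `A_i(s)` vanish since `0⁻¹ = 0`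
  have hinv : (1 + b)⁻¹ * (1 + b)⁻¹ * (1 + b) = (1 + b)⁻¹ := by
    simpa using mul_self_mul_inv (1 + b)⁻¹
  rw [Jc_smul, Jc_add, Jc_smul, Jquad_smul, Jc_smul, Jc_natCast_commute b m d,
    sub_eq_iff_eq_add.mp (Jc_Jquad_sub b m d P)]
  match_scalars
  · linear_combination (m : K) * hinv
  all_goals ring

/-- `[A_i(1), A_j(2)] = (i-1)·A_{i+j-1}(1)`, and the antisymmetrized relation
`[A_i(1), A_j(2)] − [A_j(1), A_i(2)] = (i-j)·A_{i+j-1}(1)`. -/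
theorem commutator_A1_A2 (b : K) (i j : ℕ) (hi : 1 ≤ i) (hj : 1 ≤ j) :
    commOp (Aop b 1 i) (Aop b 2 j) = ((i : K) - 1) • Aop b 1 (i + j - 1) ∧
    commOp (Aop b 1 i) (Aop b 2 j) - commOp (Aop b 1 j) (Aop b 2 i)
      = ((i : K) - (j : K)) • Aop b 1 (i + j - 1) := by
  refine ⟨commOp_Aop_one_Aop_two b hi hj, ?_⟩
  rw [commOp_Aop_one_Aop_two b hi hj, commOp_Aop_one_Aop_two b hj hi, Nat.add_comm j i,
    ← sub_smul, sub_sub_sub_cancel_right]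
end

section
/- Let A_i(2) = Σ_{n≥1} J_{i-n} J_{n-1}/(1+b) + b(i-1)J_{i-1}/(1+b), where J_i are the b-deformed currents. Then for all i, j ≥ 1, the operators A_i(2) satisfy the half-Virasoro commutation relation [A_i(2), A_j(2)] = (i-j)·A_{i+j-1}(2). -/
open MvPolynomial

variable {K : Type*} [Field K]

/-!
Write `S_l = Σ_{n ≥ 0} J_{l-n} J_n + b l J_l`. Since `A_n(1) = J_{n-1} / (1+b)`, unfolding the
recursion gives `A_{l+1}(2) = S_l / (1+b)`, so the claim is the Witt relation
`[S_k, S_l] = (1+b)(k-l) S_{k+l}` divided by `(1+b)^2` (when `1 + b = 0` both sides are `0`,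
as `0⁻¹ = 0`).

On a polynomial involving only the `p_n` with `n < M`, the sums over `n` may be cut off at `M`,
and for `k + l < M` the cut-off operators satisfy the Witt relation exactly. Indeed, by
`[J_u, J_v] = (1+b) u δ_{u+v,0}`, the coefficient of `J_{k+l-m} J_m` in the bracket of the
quadratic parts is `(1+b)(k-l)` plus a term antisymmetric under `m ↦ k + l - m`, and these terms
cancel because the `J_m` with `m ≥ 0` commute.
-/

open Finset

attribute [local instance] LieRing.ofAssociativeRing

lemma MvPolynomial.pderiv_pderiv_comm {σ R : Type*} [CommSemiring R] (i j : σ)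
    (P : MvPolynomial σ R) : pderiv i (pderiv j P) = pderiv j (pderiv i P) := by
  induction P using MvPolynomial.induction_on' with
  | monomial s a =>
    obtain rfl | hij := eq_or_ne i j
    · rfl
    · classical
      simp only [pderiv_monomial, Finsupp.tsub_apply, Finsupp.single_apply, if_neg hij,
        if_neg hij.symm, tsub_zero, tsub_right_comm]
      ring_nf
  | add p q hp hq => simp only [map_add, hp, hq]

lemma MvPolynomial.eventually_pderiv_eq_zero {R : Type*} [CommSemiring R]
    (P : MvPolynomial ℕ R) :
    ∀ᶠ m in Filter.atTop, pderiv m P = 0 :=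
  Filter.eventually_atTop.2 ⟨P.vars.sup id + 1, fun _ hm =>
    pderiv_eq_zero_of_notMem_vars fun h => by have := le_sup (f := id) h; simp at this; omega⟩

lemma Ring.lie_mul_right {A : Type*} [Ring A] (a x y : A) :
    ⁅a, x * y⁆ = ⁅a, x⁆ * y + x * ⁅a, y⁆ := by
  simp only [Ring.lie_def, mul_sub, sub_mul, mul_assoc]
  abel

lemma Ring.mul_lie_left {A : Type*} [Ring A] (x y a : A) :
    ⁅x * y, a⁆ = x * ⁅y, a⁆ + ⁅x, a⁆ * y := by
  simp only [Ring.lie_def, mul_sub, sub_mul, mul_assoc]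
  abel

lemma Finset.sum_range_ite_natCast_eq {A : Type*} [AddCommMonoid A] (M : ℕ) (w : ℤ) (a : A) :
    ∑ m ∈ range M, (if (m : ℤ) = w then a else 0) = if 0 ≤ w ∧ w < M then a else 0 := by
  split_ifs with hw
  · rw [sum_eq_single_of_mem w.toNat (mem_range.2 (by omega)) fun m _ hm => if_neg (by omega),
      if_pos (by omega)]
  · exact sum_eq_zero fun m hm => if_neg fun h => hw ⟨by omega, by simp at hm; omega⟩

lemma Finset.sum_range_ite_add_lt {A : Type*} [AddCommMonoid A] (f : ℕ → A) (k M : ℕ) :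
    ∑ m ∈ range M, (if k + m < M then f (k + m) else 0)
      = ∑ m ∈ range M, (if k ≤ m then f m else 0) := by
  rw [← sum_filter, ← sum_filter,
    show {m ∈ range M | k + m < M} = range (M - k) by
      ext m; simp only [mem_filter, mem_range]; omega,
    show {m ∈ range M | k ≤ m} = Ico k M by
      ext m; simp only [mem_filter, mem_range, mem_Ico]; omega,
    sum_Ico_eq_sum_range]

-- The coefficient of `J_{k+l-m} J_m` in `⁅truncQuad k, truncQuad l⁆ / (1 + b)`, minus `k - l`.
def bracketDefect (k l m : ℕ) : ℤ :=
  (if m ≤ k + l then (m : ℤ) - l else 0) + (if l ≤ m then (m : ℤ) - l else 0)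
    + (if k ≤ m then (k : ℤ) - m else 0) - ((k : ℤ) - l)

lemma bracketDefect_of_lt {k l m : ℕ} (h : k + l < m) : bracketDefect k l m = 0 := by
  unfold bracketDefect; split_ifs <;> omega

lemma bracketDefect_reflect {k l m : ℕ} (h : m ≤ k + l) :
    bracketDefect k l (k + l - m) = -bracketDefect k l m := by
  unfold bracketDefect; split_ifs <;> omega

section Currents

variable (b : K)

noncomputable def current (u : ℤ) : Module.End K (MvPolynomial ℕ K) :=
  if 0 < u then ((1 + b) * (u : K)) • (pderiv u.toNat).toLinearMap
  else if u < 0 then LinearMap.mulLeft K (X (-u).toNat)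
  else 0

lemma current_apply (u : ℤ) (P : MvPolynomial ℕ K) : current b u P = Jc b u P := by
  unfold current Jc
  split_ifs <;> rfl

lemma current_apply_of_pos {u : ℤ} (hu : 0 < u) (P : MvPolynomial ℕ K) :
    current b u P = ((1 + b) * (u : K)) • pderiv u.toNat P := by
  simp [current, hu]

lemma current_apply_of_neg {u : ℤ} (hu : u < 0) (P : MvPolynomial ℕ K) :
    current b u P = X (-u).toNat * P := by
  simp [current, hu, hu.not_gt]

@[simp]
lemma current_zero : current b 0 = 0 := by
  simp [current]

lemma lie_current_current_of_pos_of_neg {u v : ℤ} (hu : 0 < u) (hv : v < 0) :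
    ⁅current b u, current b v⁆ = (if u + v = 0 then (1 + b) * u else 0) • 1 := by
  refine LinearMap.ext fun P => ?_
  simp only [Ring.lie_def, LinearMap.sub_apply, Module.End.mul_apply, LinearMap.smul_apply,
    Module.End.one_apply, current_apply_of_pos b hu, current_apply_of_neg b hv, pderiv_mul,
    smul_add, mul_smul_comm, add_sub_cancel_right]
  split_ifs with huv
  · rw [show (-v).toNat = u.toNat by omega, pderiv_X_self, one_mul]
  · rw [pderiv_X_of_ne (by omega), zero_mul, smul_zero, zero_smul]

theorem lie_current_current (u v : ℤ) :
    ⁅current b u, current b v⁆ = (if u + v = 0 then (1 + b) * u else 0) • 1 := by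
  rcases lt_trichotomy u 0 with hu | rfl | hu <;> rcases lt_trichotomy v 0 with hv | rfl | hv
  · rw [if_neg (by omega), zero_smul]
    refine LinearMap.ext fun P => ?_
    simp [Ring.lie_def, current_apply_of_neg b hu, current_apply_of_neg b hv, mul_left_comm]
  · simp [hu.ne]
  · rw [← lie_skew, lie_current_current_of_pos_of_neg b hv hu, add_comm]
    split_ifs with h
    · rw [show u = -v by omega, Int.cast_neg, mul_neg]
      exact (neg_smul _ _).symm
    · simp
  · simp
  · simp
  · simp
  · exact lie_current_current_of_pos_of_neg b hu hv
  · simp [hu.ne']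
  · rw [if_neg (by omega), zero_smul]
    refine LinearMap.ext fun P => ?_
    simp [Ring.lie_def, current_apply_of_pos b hu, current_apply_of_pos b hv, smul_smul, mul_comm,
      pderiv_pderiv_comm]

lemma lie_current_current_of_nonneg {u v : ℤ} (hu : 0 ≤ u) (hv : 0 ≤ v) :
    ⁅current b u, current b v⁆ = 0 := by
  rw [lie_current_current]
  split_ifs with h
  · simp [show u = 0 by omega]
  · simp

variable {M : ℕ} {Z : MvPolynomial ℕ K}

lemma pderiv_current_apply_eq_zero (hZ : ∀ m, M ≤ m → pderiv m Z = 0) {u : ℤ} (hu : -u < M)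
    {m : ℕ} (hm : M ≤ m) : pderiv m (current b u Z) = 0 := by
  rcases lt_trichotomy u 0 with h | rfl | h
  · rw [current_apply_of_neg b h, pderiv_mul, pderiv_X_of_ne (by omega), hZ m hm, zero_mul,
      mul_zero, add_zero]
  · simp
  · rw [current_apply_of_pos b h, Derivation.map_smul, pderiv_pderiv_comm, hZ m hm, map_zero,
      smul_zero]

lemma current_natCast_apply_eq_zero (hZ : ∀ m, M ≤ m → pderiv m Z = 0) {n : ℕ}
    (hn : M ≤ n) :    current b n Z = 0 := by
  obtain rfl | hn₀ := eq_or_ne n 0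
  · simp
  · rw [current_apply_of_pos b (by omega), Int.toNat_natCast, hZ n hn, smul_zero]

end Currents

section Truncated

variable (b : K) (M : ℕ)

noncomputable def quadSum (s : ℤ) (c : ℕ → K) : Module.End K (MvPolynomial ℕ K) :=
  ∑ m ∈ range M, c m • (current b (s - m) * current b m)

noncomputable def truncQuad (s : ℤ) : Module.End K (MvPolynomial ℕ K) :=
  quadSum b M s 1

-- `(1 + b) A_{s+1}(2)`, with the sum over `n` cut off at `M`.
noncomputable def truncVirasoro (s : ℤ) : Module.End K (MvPolynomial ℕ K) :=
  truncQuad b M s + (b * s) • current b s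

lemma quadSum_intCast_eq_zero_of_antisymm {s : ℕ} (hs : s < M) {d : ℕ → ℤ}
    (hd : ∀ m ≤ s, d (s - m) = -d m) (hd' : ∀ m, s < m → d m = 0) :
    quadSum b M s (fun m => (d m : K)) = 0 := by
  simp only [quadSum]
  rw [← sum_subset (range_subset_range.2 (by omega : s + 1 ≤ M))
    fun m _ hm => by rw [hd' m (by simpa using hm), Int.cast_zero, zero_smul]]
  refine sum_involution (fun m _ => s - m) (fun m hm => ?_) (fun m hm hne h => hne ?_)
    (fun m hm => by simp only [mem_range] at hm ⊢; omega)
    (fun m hm => by simp only [mem_range] at hm; omega)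
  all_goals have hm : m ≤ s := by simp only [mem_range] at hm; omega
  · have hJ : current b (s - m) * current b m = current b m * current b (s - m) := by
      rw [← sub_eq_zero, ← Ring.lie_def, lie_current_current_of_nonneg b (by omega) (by omega)]
    rw [hd m hm, Nat.cast_sub hm, sub_sub_cancel, hJ, Int.cast_neg]
    module
  · have := hd m hm
    rw [h] at this
    rw [show d m = 0 by omega, Int.cast_zero, zero_smul]

lemma lie_current_mul_current_current (k v : ℤ) (m : ℕ) :
    ⁅current b (k - m) * current b m, current b v⁆ =
      (if (m : ℤ) = k + v then ((1 + b) * -v) • current b (k + v) else 0)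
        + (if (m : ℤ) = -v then ((1 + b) * -v) • current b (k + v) else 0) := by
  rw [Ring.mul_lie_left, lie_current_current, lie_current_current, mul_smul_comm, mul_one,
    smul_mul_assoc, one_mul, add_comm]
  congr 1
  · by_cases h : (m : ℤ) = k + v
    · rw [if_pos (by omega), if_pos h, ← h, show k - m = -v by omega, Int.cast_neg]
    · rw [if_neg (by omega), if_neg h, zero_smul]
  · by_cases h : (m : ℤ) = -v
    · rw [if_pos (by omega), if_pos h, show k - m = k + v by omega, ← Int.cast_neg, ← h]
    · rw [if_neg (by omega), if_neg h, zero_smul]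

lemma lie_truncQuad_current (k v : ℤ) :
    ⁅truncQuad b M k, current b v⁆ =
      (if 0 ≤ k + v ∧ k + v < M then ((1 + b) * -v) • current b (k + v) else 0)
        + (if 0 ≤ -v ∧ -v < M then ((1 + b) * -v) • current b (k + v) else 0) := by
  simp only [truncQuad, quadSum, Pi.one_apply, one_smul, sum_lie,
    lie_current_mul_current_current, sum_add_distrib, sum_range_ite_natCast_eq]

lemma lie_truncQuad_current_sub_mul_current {k l m : ℕ} (hM : k + l < M) (hm : m < M) :
    ⁅truncQuad b M k, current b (l - m)⁆ * current b m =
      ((1 + b) * ((m : K) - l) * ((if m ≤ k + l then 1 else 0) + (if l ≤ m then 1 else 0))) •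
        (current b (k + l - m) * current b m) := by
  have e₁ : (0 ≤ (k : ℤ) + (l - m) ∧ (k : ℤ) + (l - m) < M) ↔ m ≤ k + l := by omega
  have e₂ : (0 ≤ -((l : ℤ) - m) ∧ -((l : ℤ) - m) < M) ↔ l ≤ m := by omega
  rw [lie_truncQuad_current, if_congr e₁ rfl rfl, if_congr e₂ rfl rfl,
    show (k : ℤ) + (l - m) = k + l - m by ring]
  split_ifs <;> simp only [add_mul, smul_mul_assoc, zero_mul] <;> push_cast <;> module

lemma current_sub_mul_lie_truncQuad_current (k l m : ℕ) :
    current b (l - m) * ⁅truncQuad b M k, current b m⁆ =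
      if k + m < M then ((1 + b) * -(m : K)) • (current b (l - m) * current b (k + m))
      else 0 := by
  have h₀ : (if 0 ≤ -(m : ℤ) ∧ -(m : ℤ) < M then
      ((1 + b) * -((m : ℤ) : K)) • current b (k + m) else 0) = 0 := by
    split_ifs with h
    · obtain rfl : m = 0 := by omega
      simp
    · rfl
  rw [lie_truncQuad_current, h₀, add_zero,
    if_congr (show 0 ≤ (k : ℤ) + m ∧ (k : ℤ) + m < M ↔ k + m < M by omega) rfl rfl]
  split_ifs
  · rw [mul_smul_comm, Int.cast_natCast]
  · rw [mul_zero]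

lemma lie_truncQuad_truncQuad {k l : ℕ} (hM : k + l < M) :
    ⁅truncQuad b M k, truncQuad b M l⁆
      = ((1 + b) * ((k : K) - l)) • truncQuad b M (k + l) := by
  set X : ℕ → Module.End K (MvPolynomial ℕ K) := fun m => current b (k + l - m) * current b m
    with hX
  calc ⁅truncQuad b M k, truncQuad b M l⁆
      = ∑ m ∈ range M, (⁅truncQuad b M k, current b (l - m)⁆ * current b m
          + current b (l - m) * ⁅truncQuad b M k, current b m⁆) := by
        simp only [truncQuad, quadSum, Pi.one_apply, one_smul, lie_sum, Ring.lie_mul_right]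
    _ = ∑ m ∈ range M, (((1 + b) * ((m : K) - l) *
            ((if m ≤ k + l then 1 else 0) + (if l ≤ m then 1 else 0))) • X m
          + if k + m < M then ((1 + b) * ((k : K) - (k + m : ℕ))) • X (k + m) else 0) := by
        refine sum_congr rfl fun m hm => ?_
        rw [lie_truncQuad_current_sub_mul_current b M hM (mem_range.1 hm),
          current_sub_mul_lie_truncQuad_current]
        simp only [hX, Nat.cast_add, sub_add_cancel_left]
        rw [show (k : ℤ) + l - (k + m) = l - m by ring]
    _ = ∑ m ∈ range M, ((1 + b) * ((k : K) - l) + (1 + b) * bracketDefect k l m) • X m := by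
        rw [sum_add_distrib, sum_range_ite_add_lt (fun t => ((1 + b) * ((k : K) - t)) • X t),
          ← sum_add_distrib]
        refine sum_congr rfl fun m _ => ?_
        rw [← zero_smul K (X m), ← ite_smul, ← add_smul]
        unfold bracketDefect
        congr 1
        split_ifs <;> push_cast <;> ring
    _ = ((1 + b) * ((k : K) - l)) • truncQuad b M (k + l)
          + (1 + b) • quadSum b M (k + l : ℕ) (fun m => (bracketDefect k l m : K)) := by
        simp only [add_smul, sum_add_distrib, truncQuad, quadSum, smul_sum, smul_smul,
          Pi.one_apply, one_smul, hX, Nat.cast_add]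
    _ = ((1 + b) * ((k : K) - l)) • truncQuad b M (k + l) := by
        rw [quadSum_intCast_eq_zero_of_antisymm b M hM (fun _ => bracketDefect_reflect)
          (fun _ => bracketDefect_of_lt), smul_zero, add_zero]

lemma lie_truncQuad_current_natCast {k l : ℕ} (hM : k + l < M) :
    ⁅truncQuad b M k, current b l⁆ = ((1 + b) * -(l : K)) • current b (k + l) := by
  rw [lie_truncQuad_current]
  obtain rfl | hl := eq_or_ne l 0
  · simp
  · rw [if_pos (by omega), if_neg (by omega), add_zero, Int.cast_natCast]

lemma lie_truncVirasoro_truncVirasoro {k l : ℕ} (hM : k + l < M) :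
    ⁅truncVirasoro b M k, truncVirasoro b M l⁆
      = ((1 + b) * ((k : K) - l)) • truncVirasoro b M (k + l) := by
  have hTT := lie_truncQuad_truncQuad b M hM
  have hTJ := lie_truncQuad_current_natCast b M hM
  have hJT := lie_truncQuad_current_natCast b M (show l + k < M by omega)
  have hJJ := lie_current_current_of_nonneg b (Int.natCast_nonneg k) (Int.natCast_nonneg l)
  rw [Int.add_comm] at hJT
  simp only [truncVirasoro, Ring.lie_def, add_mul, mul_add, smul_mul_assoc, mul_smul_comm,
    Int.cast_add, Int.cast_natCast] at hTT hTJ hJT hJJ ⊢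
  linear_combination (norm := module)
    hTT + (b * l) • hTJ - (b * k) • hJT + (b * k * (b * l)) • hJJ

variable {M}

lemma pderiv_truncVirasoro_apply_eq_zero (hM : 0 < M) {Z : MvPolynomial ℕ K}
    (hZ : ∀ m, M ≤ m → pderiv m Z = 0) (l : ℕ) {m : ℕ} (hm : M ≤ m) :
    pderiv m (truncVirasoro b M l Z) = 0 := by
  simp only [truncVirasoro, truncQuad, quadSum, Pi.one_apply, one_smul, LinearMap.add_apply,
    LinearMap.smul_apply, LinearMap.sum_apply, Module.End.mul_apply, map_add, Derivation.map_smul,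
    map_sum]
  rw [sum_eq_zero fun n hn => pderiv_current_apply_eq_zero b
      (fun m hm => pderiv_current_apply_eq_zero b hZ (by omega) hm) (by simp at hn; omega) hm,
    pderiv_current_apply_eq_zero b hZ (by omega) hm, smul_zero, zero_add]

end Truncated

section Aop

variable (b : K)

lemma Aop_succ_apply (s i : ℕ) (P : MvPolynomial ℕ K) :
    Aop b (s + 1) i P = (∑ᶠ n : ℕ, if 1 ≤ n then Jc b ((i : ℤ) - n) (Aop b s n P) else 0)
      + (b * ((i : K) - 1)) • Aop b s i P :=
  rfl

lemma Aop_one_apply {n : ℕ} (hn : 1 ≤ n) (Q : MvPolynomial ℕ K) :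
    Aop b 1 n Q = (1 + b)⁻¹ • current b (n - 1) Q := by
  have hA₀ : ∀ m, m ≠ 1 → Aop b 0 m Q = 0 := fun m hm => by simp [Aop, hm]
  have hsum : (∑ᶠ m : ℕ, if 1 ≤ m then Jc b ((n : ℤ) - m) (Aop b 0 m Q) else 0)
      = (1 + b)⁻¹ • current b (n - 1) Q := by
    rw [finsum_eq_single _ 1 fun m hm => by split_ifs <;> simp [hA₀ m hm, ← current_apply],
      if_pos le_rfl, ← current_apply, Nat.cast_one]
    simp [Aop]
  have hdiag : (b * ((n : K) - 1)) • Aop b 0 n Q = 0 := by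
    obtain rfl | hn₁ := eq_or_ne n 1
    · simp
    · rw [hA₀ n hn₁, smul_zero]
  rw [Aop_succ_apply, hsum, hdiag, add_zero]

lemma Aop_two_succ_apply {M : ℕ} {Q : MvPolynomial ℕ K} (hQ : ∀ m, M ≤ m → pderiv m Q = 0)
    (l : ℕ) : Aop b 2 (l + 1) Q = (1 + b)⁻¹ • truncVirasoro b M l Q := by
  have hterm : ∀ n : ℕ, 1 ≤ n → Jc b (((l + 1 : ℕ) : ℤ) - n) (Aop b 1 n Q)
      = (1 + b)⁻¹ • (current b (l + 1 - n) * current b (n - 1)) Q := by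
    intro n hn
    rw [Aop_one_apply b hn, ← current_apply, map_smul, Nat.cast_add, Nat.cast_one,
      Module.End.mul_apply]
  have hsupp : (Function.support fun n : ℕ =>
      if 1 ≤ n then Jc b (((l + 1 : ℕ) : ℤ) - n) (Aop b 1 n Q) else 0) ⊆ range (M + 1) := by
    intro n hn
    by_contra hnM
    simp only [coe_range, Set.mem_Iio, not_lt] at hnM
    refine hn ?_
    dsimp only
    rw [if_pos (by omega), hterm n (by omega), Module.End.mul_apply,
      show (n : ℤ) - 1 = (n - 1 : ℕ) by omega,
      current_natCast_apply_eq_zero b hQ (by omega), map_zero, smul_zero]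
  rw [Aop_succ_apply, finsum_eq_sum_of_support_subset _ hsupp, sum_range_succ',
    if_neg (by omega), add_zero,
    sum_congr rfl fun m _ => by rw [if_pos (by omega), hterm _ (by omega)],
    Aop_one_apply b (by omega)]
  simp only [truncVirasoro, truncQuad, quadSum, Pi.one_apply, one_smul, LinearMap.add_apply,
    LinearMap.smul_apply, LinearMap.sum_apply, smul_add, smul_sum]
  push_cast
  simp only [add_sub_add_right_eq_sub, add_sub_cancel_right, smul_comm (b * (l : K))]

end Aop

/-- The operators `A_i(2)` satisfy the half-Virasoro relation
`[A_i(2), A_j(2)] = (i-j)·A_{i+j-1}(2)`. -/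
theorem commutator_A2_A2 (b : K) (i j : ℕ) (hi : 1 ≤ i) (hj : 1 ≤ j) :
    commOp (Aop b 2 i) (Aop b 2 j) = ((i : K) - (j : K)) • Aop b 2 (i + j - 1) := by
  obtain ⟨k, rfl⟩ := Nat.exists_eq_add_of_le' hi
  obtain ⟨l, rfl⟩ := Nat.exists_eq_add_of_le' hj
  funext P
  obtain ⟨B, hB⟩ := Filter.eventually_atTop.1 (eventually_pderiv_eq_zero P)
  set M := B + k + l + 1
  have hP : ∀ m, M ≤ m → pderiv m P = 0 := fun m hm => hB m (by omega)
  have hSP (n : ℕ) : ∀ m, M ≤ m → pderiv m ((1 + b)⁻¹ • truncVirasoro b M n P) = 0 :=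
    fun m hm => by
      rw [Derivation.map_smul, pderiv_truncVirasoro_apply_eq_zero b (by omega) hP n hm, smul_zero]
  have hbracket := LinearMap.congr_fun
    (lie_truncVirasoro_truncVirasoro b M (show k + l < M by omega)) P
  rw [Ring.lie_def, LinearMap.sub_apply, Module.End.mul_apply, Module.End.mul_apply,
    LinearMap.smul_apply] at hbracket
  have hinv : (1 + b)⁻¹ * (1 + b)⁻¹ * (1 + b) = (1 + b)⁻¹ := by
    simpa using mul_self_mul_inv (1 + b)⁻¹
  rw [commOp, Pi.smul_apply, show k + 1 + (l + 1) - 1 = k + l + 1 by omega,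
    Aop_two_succ_apply b hP, Aop_two_succ_apply b hP, Aop_two_succ_apply b (hSP l),
    Aop_two_succ_apply b (hSP k), Aop_two_succ_apply b hP, map_smul, map_smul, smul_smul,
    smul_smul, ← smul_sub, hbracket, smul_smul, smul_smul, Nat.cast_add]
  congr 1
  push_cast
  linear_combination ((k : K) - l) * hinv
end
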